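/- Let A be an associative ring of prime characteristic p. If x ∈ [A,A], then x^p ∈ [A,A]. Consequently the sets T_i(A) = {x ∈ A : x^{p^i} ∈ [A,A]} form an ascending chain [A,A] = T_0(A) ⊆ T_1(A) ⊆ T_2(A) ⊆ …. -/

import Mathlib

/-!
Expand `(∑ i, x i) ^ p` as the sum, over all words `w : Fin p → ι`, of the ordered products
`x (w 0) * ⋯ * x (w (p - 1))`. Since `ab ≡ ba` modulo `[A, A]`, rotating a word does not change
its product modulo `[A, A]`. Rotation generates a group of order `p` acting on words, so modulo
`[A, A]` every orbit of a non-constant word has `p` elements with equal contributions and adds up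
to `0` in characteristic `p`. Only the constant words survive, giving
`(∑ i, x i) ^ p ≡ ∑ i, x i ^ p`. Together with `(ab) ^ p ≡ (ba) ^ p`, this makes
`x ↦ x ^ p mod [A, A]` additive and zero on commutators, hence zero on `[A, A]`. The chain
follows from `x ^ p ^ (i + 1) = (x ^ p ^ i) ^ p`.
-/

open Finset MulAction Equiv Fin.NatCast

theorem IsPGroup.sum_eq_sum_fixedPoints {p : ℕ} [Fact p.Prime] {G X M : Type*} [Group G]
    [MulAction G X] [Fintype X] [AddCommMonoid M] (hG : IsPGroup p G)
    (hM : ∀ m : M, p • m = 0) {φ : X → M} (hφ : ∀ (g : G) (x : X), φ (g • x) = φ x)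
    [DecidablePred (· ∈ fixedPoints G X)] :
    ∑ x, φ x = ∑ x with x ∈ fixedPoints G X, φ x := by
  classical
  rw [← sum_fiberwise univ (Quotient.mk (orbitRel G X)) φ,
    ← sum_fiberwise (univ.filter (· ∈ fixedPoints G X)) (Quotient.mk (orbitRel G X)) φ]
  refine Fintype.sum_congr _ _ (Quotient.ind fun x₀ => ?_)
  have hfiber : ∀ x, Quotient.mk (orbitRel G X) x = ⟦x₀⟧ ↔ x ∈ orbit G x₀ := fun x =>
    Quotient.eq.trans orbitRel_apply
  have hfixed : ∀ x ∈ orbit G x₀, x ∈ fixedPoints G X ↔ x₀ ∈ fixedPoints G X := fun x hx => by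
    rw [← subsingleton_orbit_iff_mem_fixedPoints, ← subsingleton_orbit_iff_mem_fixedPoints,
      orbit_eq_iff.mpr hx]
  simp only [filter_filter, hfiber]
  by_cases h₀ : x₀ ∈ fixedPoints G X
  · exact sum_congr (filter_congr fun x _ => ⟨fun hx => ⟨(hfixed x hx).mpr h₀, hx⟩, And.right⟩)
      fun _ _ => rfl
  · have hnone : univ.filter (fun x => x ∈ fixedPoints G X ∧ x ∈ orbit G x₀) = ∅ :=
      filter_false_of_mem fun x _ h => h₀ ((hfixed x h.2).mp h.1)
    have hconst : ∀ x ∈ univ.filter (· ∈ orbit G x₀), φ x = φ x₀ := by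
      intro x hx
      obtain ⟨g, rfl⟩ := (mem_filter.mp hx).2
      exact hφ g x₀
    obtain ⟨n, hn⟩ := hG.card_orbit x₀
    have hn0 : n ≠ 0 := by
      rintro rfl
      rw [mem_fixedPoints_iff_card_orbit_eq_one, ← Nat.card_eq_fintype_card] at h₀
      exact h₀ (by simpa using hn)
    rw [hnone, sum_empty, sum_congr rfl hconst, sum_const, ← Set.toFinset_ofPred,
      ← Nat.card_eq_card_toFinset, Set.ofPred_mem_eq, hn, ← Nat.succ_pred_eq_of_ne_zero hn0,
      pow_succ, mul_nsmul, hM]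

theorem finRotate_pow_apply {n : ℕ} [NeZero n] (k : ℕ) (i : Fin n) :
    (finRotate n ^ k) i = i + (k : Fin n) := by
  induction k with
  | zero => simp
  | succ k ih => rw [pow_succ', Perm.mul_apply, ih, finRotate_apply, Nat.cast_succ, add_assoc]

theorem finRotate_pow_self (n : ℕ) [NeZero n] : finRotate n ^ n = 1 := by
  ext i
  rw [finRotate_pow_apply, Fin.natCast_self, add_zero, Perm.one_apply]

theorem List.ofFn_comp_finRotate {α : Type*} {n : ℕ} (f : Fin n → α) :
    List.ofFn (f ∘ finRotate n) = (List.ofFn f).rotate 1 := by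
  cases n with
  | zero => rfl
  | succ n =>
    have hsnoc : f ∘ finRotate (n + 1) = Fin.snoc (Fin.tail f) (f 0) := by
      rw [Fin.snoc_eq_cons_rotate, Fin.cons_self_tail]; rfl
    rw [hsnoc, List.ofFn_succ_last, List.ofFn_succ, List.rotate_cons_succ, List.rotate_zero]
    simp only [Fin.snoc_castSucc, Fin.snoc_last]
    rfl

theorem List.ofFn_comp_finRotate_pow {α : Type*} {n : ℕ} (f : Fin n → α) (k : ℕ) :
    List.ofFn (f ∘ ⇑(finRotate n ^ k)) = (List.ofFn f).rotate k := by
  induction k with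
  | zero => simp
  | succ k ih =>
    rw [pow_succ, Perm.coe_mul, ← Function.comp_assoc, List.ofFn_comp_finRotate, ih,
      List.rotate_rotate]

section Words

variable {ι : Type*}

def wordRotate (ι : Type*) (n : ℕ) : Perm (Fin n → ι) :=
  (finRotate n).symm.arrowCongr (Equiv.refl ι)

theorem wordRotate_apply {n : ℕ} (w : Fin n → ι) : wordRotate ι n w = w ∘ finRotate n := rfl

theorem wordRotate_pow_apply {n : ℕ} (k : ℕ) (w : Fin n → ι) :
    (wordRotate ι n ^ k) w = w ∘ ⇑(finRotate n ^ k) := by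
  induction k generalizing w with
  | zero => rfl
  | succ k ih =>
    rw [pow_succ, Perm.mul_apply, ih, wordRotate_apply, pow_succ', Perm.coe_mul]
    rfl

theorem wordRotate_pow_self (n : ℕ) [NeZero n] : wordRotate ι n ^ n = 1 := by
  ext w : 1
  rw [wordRotate_pow_apply, finRotate_pow_self]
  rfl

theorem eq_const_of_wordRotate_eq {n : ℕ} [NeZero n] {w : Fin n → ι}
    (hw : wordRotate ι n w = w) : w = fun _ => w 0 := by
  funext i
  calc w i = (wordRotate ι n ^ (i : ℕ)) w 0 := by
        rw [wordRotate_pow_apply, Function.comp_apply, finRotate_pow_apply, zero_add,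
          Fin.cast_val_eq_self]
    _ = w 0 := by rw [Perm.pow_apply_eq_self_of_apply_eq_self hw]

theorem mem_fixedPoints_zpowers_wordRotate_iff {n : ℕ} [NeZero n] {w : Fin n → ι} :
    w ∈ fixedPoints (Subgroup.zpowers (wordRotate ι n)) (Fin n → ι) ↔ w = fun _ => w 0 := by
  constructor
  · intro hw
    exact eq_const_of_wordRotate_eq (hw ⟨_, Subgroup.mem_zpowers _⟩)
  · rintro hw ⟨g, hg⟩
    obtain ⟨k, rfl⟩ := Subgroup.mem_zpowers_iff.mp hg
    rw [hw]
    exact Perm.zpow_apply_eq_self_of_apply_eq_self rfl k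

theorem isPGroup_zpowers_wordRotate (p : ℕ) [NeZero p] :
    IsPGroup p (Subgroup.zpowers (wordRotate ι p)) :=
  IsPGroup.of_card_dvd_pow (n := 1) <| by
    rw [Nat.card_zpowers, pow_one]
    exact orderOf_dvd_of_pow_eq_one (wordRotate_pow_self p)

theorem exists_pow_eq_of_mem_zpowers_wordRotate {n : ℕ} [NeZero n] {g : Perm (Fin n → ι)}
    (hg : g ∈ Subgroup.zpowers (wordRotate ι n)) : ∃ k : ℕ, wordRotate ι n ^ k = g :=
  IsOfFinOrder.mem_powers_iff_mem_zpowers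
    (isOfFinOrder_iff_pow_eq_one.mpr ⟨n, NeZero.pos n, wordRotate_pow_self n⟩) |>.mpr hg

theorem sum_pow_eq_sum_prod_ofFn {R : Type*} [Semiring R] [Fintype ι] (x : ι → R) (n : ℕ) :
    (∑ i, x i) ^ n = ∑ w : Fin n → ι, (List.ofFn (x ∘ w)).prod := by
  induction n with
  | zero => simp
  | succ n ih =>
    rw [pow_succ', ih, Fintype.sum_mul_sum, ← (Fin.consEquiv fun _ => ι).sum_comp,
      Fintype.sum_prod_type]
    simp only [List.ofFn_succ, Function.comp_apply, Fin.consEquiv_apply, Fin.cons_zero,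
      Fin.cons_succ, List.prod_cons]
    rfl

end Words

theorem QuotientAddGroup.nsmul_char_eq_zero {A : Type*} [Ring A] {N : AddSubgroup A} (p : ℕ)
    [CharP A p] (m : A ⧸ N) : p • m = 0 := by
  induction m using QuotientAddGroup.induction_on with
  | H a =>
    rw [← QuotientAddGroup.mk_nsmul, nsmul_eq_mul, CharP.cast_eq_zero, zero_mul,
      QuotientAddGroup.mk_zero]

def commutatorSpan (A : Type*) [Ring A] : AddSubgroup A :=
  AddSubgroup.closure {z | ∃ a b : A, z = a * b - b * a}

def cocenterMk (A : Type*) [Ring A] : A →+ A ⧸ commutatorSpan A :=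
  QuotientAddGroup.mk' _

section Cocenter

variable {A : Type*} [Ring A]

theorem cocenterMk_eq_zero_iff {x : A} : cocenterMk A x = 0 ↔ x ∈ commutatorSpan A :=
  QuotientAddGroup.eq_zero_iff x

theorem cocenterMk_mul_comm (a b : A) : cocenterMk A (a * b) = cocenterMk A (b * a) :=
  QuotientAddGroup.eq_iff_sub_mem.mpr (AddSubgroup.subset_closure ⟨a, b, rfl⟩)

theorem cocenterMk_prod_rotate (l : List A) (k : ℕ) :
    cocenterMk A (l.rotate k).prod = cocenterMk A l.prod := by
  rw [List.rotate_eq_drop_append_take_mod, List.prod_append, cocenterMk_mul_comm,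
    List.prod_take_mul_prod_drop]

theorem cocenterMk_pow_mul_comm (a b : A) (n : ℕ) :
    cocenterMk A ((a * b) ^ n) = cocenterMk A ((b * a) ^ n) := by
  cases n with
  | zero => simp
  | succ n =>
    rw [pow_succ, ← mul_assoc, mul_pow_mul, mul_assoc, cocenterMk_mul_comm, mul_assoc,
      ← pow_succ]

theorem cocenterMk_sum_pow {ι : Type*} [Fintype ι] (p : ℕ) [Fact p.Prime] [CharP A p]
    (x : ι → A) : cocenterMk A ((∑ i, x i) ^ p) = ∑ i, cocenterMk A (x i ^ p) := by
  classical
  have : NeZero p := ⟨(Fact.out : p.Prime).ne_zero⟩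
  have hinv : ∀ (g : Subgroup.zpowers (wordRotate ι p)) (w : Fin p → ι),
      cocenterMk A (List.ofFn (x ∘ (g • w))).prod = cocenterMk A (List.ofFn (x ∘ w)).prod := by
    rintro ⟨g, hg⟩ w
    obtain ⟨k, rfl⟩ := exists_pow_eq_of_mem_zpowers_wordRotate hg
    rw [Subgroup.mk_smul, Perm.smul_def, wordRotate_pow_apply, ← Function.comp_assoc,
      List.ofFn_comp_finRotate_pow, cocenterMk_prod_rotate]
  rw [sum_pow_eq_sum_prod_ofFn, map_sum, (isPGroup_zpowers_wordRotate p).sum_eq_sum_fixedPoints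
    (QuotientAddGroup.nsmul_char_eq_zero p) hinv]
  refine sum_nbij' (fun w => w 0) (fun i _ => i) (fun _ _ => mem_univ _)
    (fun i _ => mem_filter.mpr ⟨mem_univ _, mem_fixedPoints_zpowers_wordRotate_iff.mpr rfl⟩)
    (fun w hw => (mem_fixedPoints_zpowers_wordRotate_iff.mp (mem_filter.mp hw).2).symm)
    (fun _ _ => rfl) fun w hw => ?_
  rw [mem_fixedPoints_zpowers_wordRotate_iff.mp (mem_filter.mp hw).2]
  simp only [Function.comp_def, List.ofFn_const, List.prod_replicate]

theorem cocenterMk_add_pow (p : ℕ) [Fact p.Prime] [CharP A p] (x y : A) :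
    cocenterMk A ((x + y) ^ p) = cocenterMk A (x ^ p) + cocenterMk A (y ^ p) := by
  simpa using cocenterMk_sum_pow p ![x, y]

theorem cocenterMk_neg_pow (p : ℕ) [Fact p.Prime] [CharP A p] (x : A) :
    cocenterMk A ((-x) ^ p) = -cocenterMk A (x ^ p) := by
  have h := cocenterMk_add_pow p (-x) x
  rw [neg_add_cancel, zero_pow (Fact.out : p.Prime).ne_zero, map_zero] at h
  exact eq_neg_of_add_eq_zero_left h.symm

theorem pow_mem_commutatorSpan (p : ℕ) [Fact p.Prime] [CharP A p] {x : A}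
    (hx : x ∈ commutatorSpan A) : x ^ p ∈ commutatorSpan A := by
  rw [← cocenterMk_eq_zero_iff]
  induction hx using AddSubgroup.closure_induction with
  | mem _ hz =>
    obtain ⟨a, b, rfl⟩ := hz
    rw [sub_eq_add_neg, cocenterMk_add_pow, cocenterMk_neg_pow, cocenterMk_pow_mul_comm,
      add_neg_cancel]
  | zero => rw [zero_pow (Fact.out : p.Prime).ne_zero, map_zero]
  | add _ _ _ _ hu hv => rw [cocenterMk_add_pow, hu, hv, add_zero]
  | neg _ _ hu => rw [cocenterMk_neg_pow, hu, neg_zero]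

end Cocenter

theorem kuelshammer_chain (A : Type*) [Ring A] (p : ℕ)
    [Fact p.Prime] [CharP A p] :
    (∀ x ∈ AddSubgroup.closure {z : A | ∃ a b : A, z = a * b - b * a},
        x ^ p ∈ AddSubgroup.closure {z : A | ∃ a b : A, z = a * b - b * a}) ∧
      {x : A | x ^ p ^ 0 ∈ AddSubgroup.closure {z : A | ∃ a b : A, z = a * b - b * a}}
        = (AddSubgroup.closure {z : A | ∃ a b : A, z = a * b - b * a} : Set A) ∧
      ∀ i : ℕ,
        {x : A | x ^ p ^ i ∈ AddSubgroup.closure {z : A | ∃ a b : A, z = a * b - b * a}} ⊆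
        {x : A | x ^ p ^ (i + 1) ∈
          AddSubgroup.closure {z : A | ∃ a b : A, z = a * b - b * a}} := by
  refine ⟨fun x hx => pow_mem_commutatorSpan p hx, by simp, fun i x hx => ?_⟩
  rw [Set.mem_ofPred_eq, pow_succ, pow_mul]
  exact pow_mem_commutatorSpan p hx
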